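/- If n = p^s is a prime power (p prime, s ≥ 1), then the n×n square has no perfect Mondrian partition. -/

import Mathlib

/-- An axis-aligned rectangle with integer coordinates placed on the grid:
lower-left corner `(x, y)`, width `w`, and height `h`. -/
structure Rect where
  x : ℕ
  y : ℕ
  w : ℕ
  h : ℕ
deriving DecidableEq

/-- The area of a rectangle. -/
def Rect.area (r : Rect) : ℕ := r.w * r.h

/-- Two rectangles are congruent if they have the same dimensions,
possibly after a ninety-degree rotation. -/
def Rect.Congruent (r s : Rect) : Prop :=
  (r.w = s.w ∧ r.h = s.h) ∨ (r.w = s.h ∧ r.h = s.w)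

/-- The rectangle `r` covers the unit grid cell `[i, i+1) × [j, j+1)`. -/
def Rect.Covers (r : Rect) (i j : ℕ) : Prop :=
  r.x ≤ i ∧ i < r.x + r.w ∧ r.y ≤ j ∧ j < r.y + r.h

/-- A Mondrian partition of the `n × n` square: a finite collection of
pairwise non-congruent rectangles with positive integer side lengths that
tile the square (every cell of the square is covered by exactly one
rectangle, and rectangles lie inside the square). -/
structure Mondrian (n : ℕ) where
  rects : Finset Rect
  pos : ∀ r ∈ rects, 0 < r.w ∧ 0 < r.h
  inside : ∀ r ∈ rects, r.x + r.w ≤ n ∧ r.y + r.h ≤ n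
  cover : ∀ i j : ℕ, i < n → j < n → ∃! r : Rect, r ∈ rects ∧ r.Covers i j
  noncong : ∀ r ∈ rects, ∀ s ∈ rects, r ≠ s → ¬ r.Congruent s

/-- The defect of a Mondrian partition: the difference between the largest
and the smallest rectangle areas. -/
def Mondrian.defect {n : ℕ} (P : Mondrian n) : ℕ :=
  P.rects.sup fun r => P.rects.sup fun s => r.area - s.area

/-- A Mondrian partition is perfect if all its rectangles have the same area. -/
def Mondrian.IsPerfect {n : ℕ} (P : Mondrian n) : Prop :=
  ∀ r ∈ P.rects, ∀ s ∈ P.rects, r.area = s.area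

/-- `mondrianDk n k` is the minimum defect over all Mondrian partitions of the
`n × n` square using exactly `k` rectangles. -/
noncomputable def mondrianDk (n k : ℕ) : ℕ :=
  sInf {d | ∃ P : Mondrian n, P.rects.card = k ∧ P.defect = d}

/-- `mondrianD n` is the minimum defect over all Mondrian partitions of the
`n × n` square (into at least two rectangles). -/
noncomputable def mondrianD (n : ℕ) : ℕ :=
  sInf {d | ∃ P : Mondrian n, 2 ≤ P.rects.card ∧ P.defect = d}


/-!
If all `k` rectangles have the same area `A`, then `k * A = p ^ (2 * s)`, so `k = p ^ t` with
`t ≥ 1` and `A = p ^ m` with `m = 2 * s - t`. Every rectangle is then `p ^ a × p ^ (m - a)` with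
both sides at most `p ^ s`, and non-congruent rectangles of equal area have distinct shorter
sides, so `k` is at most the number of admissible exponents `m - s ≤ a ≤ m / 2`, which is
`⌊t / 2⌋ + 1 ≤ t < p ^ t`.
-/

open Finset

namespace Rect

def cells (r : Rect) : Finset (ℕ × ℕ) :=
  Ico r.x (r.x + r.w) ×ˢ Ico r.y (r.y + r.h)

theorem mem_cells {r : Rect} {c : ℕ × ℕ} : c ∈ r.cells ↔ r.Covers c.1 c.2 := by
  simp [cells, Covers, and_assoc]

theorem card_cells (r : Rect) : #r.cells = r.area := by
  simp [cells, area]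

theorem congruent_of_area_eq_of_min_eq {r s : Rect} (hpos : 0 < min r.w r.h)
    (harea : r.area = s.area) (hmin : min r.w r.h = min s.w s.h) : r.Congruent s := by
  have hmax : max r.w r.h = max s.w s.h := by
    apply Nat.eq_of_mul_eq_mul_left hpos
    rw [min_mul_max, hmin, min_mul_max]
    exact harea
  unfold Congruent
  omega

end Rect

namespace Mondrian

variable {n : ℕ} (P : Mondrian n)

theorem cells_subset {r : Rect} (hr : r ∈ P.rects) : r.cells ⊆ range n ×ˢ range n := by
  intro c hc
  have := P.inside r hr
  simp only [Rect.cells, mem_product, mem_Ico, mem_range] at hc ⊢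
  omega

theorem biUnion_cells : P.rects.biUnion Rect.cells = range n ×ˢ range n := by
  refine Subset.antisymm (biUnion_subset.mpr fun r hr => P.cells_subset hr) fun c hc => ?_
  rw [mem_product, mem_range, mem_range] at hc
  obtain ⟨r, ⟨hr, hcov⟩, -⟩ := P.cover c.1 c.2 hc.1 hc.2
  exact mem_biUnion.mpr ⟨r, hr, Rect.mem_cells.mpr hcov⟩

theorem pairwiseDisjoint_cells : (P.rects : Set Rect).PairwiseDisjoint Rect.cells := by
  intro r hr r' hr' hne
  refine disjoint_left.mpr fun c hc hc' => hne ?_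
  have hsq := mem_product.mp (P.cells_subset hr hc)
  rw [mem_range, mem_range] at hsq
  exact (P.cover c.1 c.2 hsq.1 hsq.2).unique ⟨hr, Rect.mem_cells.mp hc⟩
    ⟨hr', Rect.mem_cells.mp hc'⟩

theorem sum_area : ∑ r ∈ P.rects, r.area = n * n := by
  have := congrArg card P.biUnion_cells
  rwa [card_biUnion P.pairwiseDisjoint_cells, card_product, card_range,
    sum_congr rfl fun r _ => r.card_cells] at this

theorem card_mul_area_of_isPerfect (hP : P.IsPerfect) {r : Rect} (hr : r ∈ P.rects) :
    #P.rects * r.area = n * n := by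
  rw [← P.sum_area, sum_congr rfl fun r' hr' => hP r' hr' r hr, sum_const, smul_eq_mul]

theorem injOn_min_of_isPerfect (hP : P.IsPerfect) :
    Set.InjOn (fun r : Rect => min r.w r.h) P.rects := by
  intro r hr r' hr' hmin
  by_contra hne
  exact P.noncong r hr r' hr' hne <| Rect.congruent_of_area_eq_of_min_eq
    (lt_min (P.pos r hr).1 (P.pos r hr).2) (hP r hr r' hr') hmin

end Mondrian

theorem min_mem_image_pow_Icc_of_mul_eq_prime_pow {p m s a b : ℕ} (hp : p.Prime)
    (hab : a * b = p ^ m) (ha : a ≤ p ^ s) (hb : b ≤ p ^ s) :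
    min a b ∈ (Icc (m - s) (m / 2)).image (p ^ ·) := by
  obtain ⟨i, -, rfl⟩ := (Nat.dvd_prime_pow hp).mp (Dvd.intro _ hab)
  obtain ⟨j, -, rfl⟩ := (Nat.dvd_prime_pow hp).mp (Dvd.intro_left _ hab)
  have hij : i + j = m := Nat.pow_right_injective hp.two_le (by simpa [pow_add] using hab)
  rw [Nat.pow_le_pow_iff_right hp.one_lt] at ha hb
  refine mem_image.mpr ⟨min i j, mem_Icc.mpr ⟨by omega, by omega⟩, ?_⟩
  exact (pow_right_mono₀ hp.one_lt.le).map_min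

theorem Mondrian.card_le_of_area_eq_prime_pow {p s m : ℕ} (P : Mondrian (p ^ s))
    (hp : p.Prime) (hA : ∀ r ∈ P.rects, r.area = p ^ m) :
    #P.rects ≤ m / 2 + 1 - (m - s) := by
  have hP : P.IsPerfect := fun r hr r' hr' => (hA r hr).trans (hA r' hr').symm
  calc #P.rects = #(P.rects.image fun r => min r.w r.h) :=
        (card_image_of_injOn (P.injOn_min_of_isPerfect hP)).symm
    _ ≤ #((Icc (m - s) (m / 2)).image (p ^ ·)) := by
        refine card_le_card (image_subset_iff.mpr fun r hr => ?_)
        have hw := (P.inside r hr).1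
        have hh := (P.inside r hr).2
        exact min_mem_image_pow_Icc_of_mul_eq_prime_pow hp (hA r hr) (by omega) (by omega)
    _ ≤ #(Icc (m - s) (m / 2)) := card_image_le
    _ = m / 2 + 1 - (m - s) := Nat.card_Icc _ _

theorem no_perfect_of_prime_pow_general (p s : ℕ) (hp : p.Prime) :
    ¬ ∃ P : Mondrian (p ^ s), 2 ≤ P.rects.card ∧ P.IsPerfect := by
  rintro ⟨P, hk, hP⟩
  obtain ⟨r₀, hr₀⟩ := card_pos.mp (by omega : 0 < #P.rects)
  have hkA : #P.rects * r₀.area = p ^ (2 * s) := by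
    rw [P.card_mul_area_of_isPerfect hP hr₀, ← pow_add, two_mul]
  obtain ⟨t, -, hkt⟩ := (Nat.dvd_prime_pow hp).mp (Dvd.intro _ hkA)
  obtain ⟨m, -, hAm⟩ := (Nat.dvd_prime_pow hp).mp (Dvd.intro_left _ hkA)
  have htm : t + m = 2 * s :=
    Nat.pow_right_injective hp.two_le (by simpa [pow_add, ← hkt, ← hAm] using hkA)
  have hcard := P.card_le_of_area_eq_prime_pow hp fun r hr => (hP r hr r₀ hr₀).trans hAm
  have ht_pos : t ≠ 0 := by
    rintro rfl
    rw [pow_zero] at hkt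
    omega
  have ht_lt : t < p ^ t := Nat.lt_pow_self hp.one_lt
  omega

/-- If `n = p^s` is a prime power, then the `n × n` square has no perfect
Mondrian partition. -/
theorem no_perfect_of_prime_pow (p s : ℕ) (hp : p.Prime) (hs : 1 ≤ s) :
    ¬ ∃ P : Mondrian (p ^ s), 2 ≤ P.rects.card ∧ P.IsPerfect :=
  no_perfect_of_prime_pow_general p s hp
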